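/- Let n ≥ 2, ε > 0, τ ≥ 0, and define the nonlinear flow Φ_B^τ(w) = w·exp(−iτ f_n^ε(|w|²)) pointwise. Then for any two complex numbers v, w, |Φ_B^τ(v) − Φ_B^τ(w)| ≤ (1 + 4nτ)·|v − w|. -/

import Mathlib

open Real Complex MeasureTheory

/-- `q_n^ε`, the polynomial part of the locally regularized logarithm on `[0, ε²)`. -/
noncomputable def qfun (n : ℕ) (ε ρ : ℝ) : ℝ :=
  Real.log (ε ^ 2) - ((n + 1 : ℝ) / n) * (1 - ρ / ε ^ 2) ^ n
    - ∑ k ∈ Finset.Icc 1 (n - 1), (1 / (k : ℝ)) * (1 - ρ / ε ^ 2) ^ k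

/-- The locally regularized logarithm `f_n^ε` of the LER construction. -/
noncomputable def freg (n : ℕ) (ε ρ : ℝ) : ℝ :=
  if ε ^ 2 ≤ ρ then Real.log ρ else qfun n ε ρ

/-- The pointwise nonlinear flow `Φ_B^τ(w) = w exp(−iτ f_n^ε(|w|²))`. -/
noncomputable def PhiB (n : ℕ) (ε τ : ℝ) (w : ℂ) : ℂ :=
  w * Complex.exp (-(Complex.I * τ * (freg n ε (‖w‖ ^ 2) : ℝ)))
/-!
Write `Φ(w) = w e^{iθ(|w|)}` with the real phase `θ(r) = -τ f_n^ε(r²)`. Splitting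
`Φ(v) - Φ(w) = (v - w) e^{iθ(|w|)} + v (e^{iθ(|v|)} - e^{iθ(|w|)})` with `|v| ≤ |w|`, the first
term costs `|v - w|` and the second at most `|v| |θ(|w|) - θ(|v|)|`. So it suffices that
`a |θ(b) - θ(a)| ≤ L (b - a)` for `0 ≤ a ≤ b` (a difference form of `|θ'(r)| ≤ L / r`). For
`θ = -τ f_n^ε(r²)` this holds with `L = 4nτ`: on `r ≥ ε` the phase is `-2τ log r`, and on
`r ≤ ε` it is a polynomial in `1 - r²/ε²` whose derivative in `r²` is at most `2n/ε²`.
-/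

open Set

def WeightedLipschitzOn (g : ℝ → ℝ) (L : ℝ) (s : Set ℝ) : Prop :=
  ∀ ⦃a⦄, a ∈ s → ∀ ⦃b⦄, b ∈ s → a ≤ b → a * |g b - g a| ≤ L * (b - a)

namespace WeightedLipschitzOn

variable {g : ℝ → ℝ} {L : ℝ}

theorem weaken {s : Set ℝ} (hg : WeightedLipschitzOn g L s) {L' : ℝ} (hL : L ≤ L') :
    WeightedLipschitzOn g L' s := fun _ ha _ hb hab =>
  (hg ha hb hab).trans (mul_le_mul_of_nonneg_right hL (sub_nonneg.2 hab))

theorem const_mul {s : Set ℝ} (hg : WeightedLipschitzOn g L s) (c : ℝ) :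
    WeightedLipschitzOn (fun r => c * g r) (|c| * L) s := fun a ha b hb hab => by
  have := mul_le_mul_of_nonneg_left (hg ha hb hab) (abs_nonneg c)
  calc a * |c * g b - c * g a| = |c| * (a * |g b - g a|) := by
        rw [← mul_sub, abs_mul]; ring
    _ ≤ |c| * L * (b - a) := by linarith

theorem Ici_of_Icc_of_Ici {c : ℝ} (h₁ : WeightedLipschitzOn g L (Icc 0 c))
    (h₂ : WeightedLipschitzOn g L (Ici c)) : WeightedLipschitzOn g L (Ici 0) := by
  intro a ha b hb hab
  rcases le_total b c with hbc | hcb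
  · exact h₁ ⟨ha, hab.trans hbc⟩ ⟨hb, hbc⟩ hab
  rcases le_total c a with hca | hac
  · exact h₂ hca hcb hab
  have hc : c ∈ Icc 0 c := ⟨(mem_Ici.1 ha).trans hac, le_rfl⟩
  calc a * |g b - g a| ≤ a * |g b - g c| + a * |g c - g a| := by
        rw [← mul_add]
        exact mul_le_mul_of_nonneg_left (abs_sub_le _ _ _) ha
    _ ≤ c * |g b - g c| + L * (c - a) :=
        add_le_add (mul_le_mul_of_nonneg_right hac (abs_nonneg _)) (h₁ ⟨ha, hac⟩ hc hac)
    _ ≤ L * (b - c) + L * (c - a) := add_le_add_left (h₂ (mem_Ici.2 le_rfl) hcb hcb) _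
    _ = L * (b - a) := by ring

end WeightedLipschitzOn

theorem Complex.norm_exp_I_mul_ofReal_sub_exp_I_mul_ofReal_le (x y : ℝ) :
    ‖Complex.exp (Complex.I * x) - Complex.exp (Complex.I * y)‖ ≤ |x - y| := by
  have hsplit : Complex.exp (Complex.I * x) - Complex.exp (Complex.I * y) =
      Complex.exp (Complex.I * y) * (Complex.exp (Complex.I * ↑(x - y)) - 1) := by
    rw [mul_sub, ← Complex.exp_add]; push_cast; ring_nf
  rw [hsplit, norm_mul, Complex.norm_exp_I_mul_ofReal, one_mul]
  exact Real.norm_exp_I_mul_ofReal_sub_one_le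

theorem norm_mul_exp_I_mul_phase_sub_le {θ : ℝ → ℝ} {L : ℝ} (hL : 0 ≤ L)
    (hθ : WeightedLipschitzOn θ L (Ici 0)) (v w : ℂ) :
    ‖v * Complex.exp (Complex.I * θ ‖v‖) - w * Complex.exp (Complex.I * θ ‖w‖)‖ ≤
      (1 + L) * ‖v - w‖ := by
  wlog hvw : ‖v‖ ≤ ‖w‖ generalizing v w
  · rw [norm_sub_rev, norm_sub_rev v]
    exact this w v (le_of_not_ge hvw)
  have hphase := Complex.norm_exp_I_mul_ofReal_sub_exp_I_mul_ofReal_le (θ ‖v‖) (θ ‖w‖)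
  calc ‖v * Complex.exp (Complex.I * θ ‖v‖) - w * Complex.exp (Complex.I * θ ‖w‖)‖
      = ‖(v - w) * Complex.exp (Complex.I * θ ‖w‖) +
          v * (Complex.exp (Complex.I * θ ‖v‖) - Complex.exp (Complex.I * θ ‖w‖))‖ := by
        ring_nf
    _ ≤ ‖v - w‖ + ‖v‖ * |θ ‖w‖ - θ ‖v‖| := by
        grw [norm_add_le, norm_mul, norm_mul, Complex.norm_exp_I_mul_ofReal, hphase,
          mul_one, abs_sub_comm]
    _ ≤ ‖v - w‖ + L * (‖w‖ - ‖v‖) := by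
        grw [hθ (norm_nonneg v) (norm_nonneg w) hvw]
    _ ≤ ‖v - w‖ + L * ‖v - w‖ := by
        grw [← norm_sub_rev, norm_sub_norm_le]
    _ = (1 + L) * ‖v - w‖ := by ring

theorem abs_pow_sub_pow_le_of_abs_le_one {x y : ℝ} (hx : |x| ≤ 1) (hy : |y| ≤ 1) (k : ℕ) :
    |x ^ k - y ^ k| ≤ k * |x - y| := by
  calc |x ^ k - y ^ k| ≤ |x - y| * k * max |x| |y| ^ (k - 1) := abs_pow_sub_pow_le ..
    _ ≤ |x - y| * k * 1 := by gcongr; exact pow_le_one₀ (by positivity) (max_le hx hy)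
    _ = k * |x - y| := by ring


theorem abs_qfun_sub_qfun_le {n : ℕ} (hn : n ≠ 0) {ε : ℝ} (hε : ε ≠ 0) {ρ₁ ρ₂ : ℝ}
    (h₁ : ρ₁ ∈ Icc 0 (ε ^ 2)) (h₂ : ρ₂ ∈ Icc 0 (ε ^ 2)) :
    |qfun n ε ρ₁ - qfun n ε ρ₂| ≤ 2 * n * |ρ₁ - ρ₂| / ε ^ 2 := by
  have hε2 : 0 < ε ^ 2 := by positivity
  have hunit : ∀ ρ ∈ Icc 0 (ε ^ 2), |1 - ρ / ε ^ 2| ≤ 1 := fun ρ hρ => by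
    have : ρ / ε ^ 2 ≤ 1 := (div_le_one hε2).2 hρ.2
    rw [abs_le]; constructor <;> nlinarith [div_nonneg hρ.1 hε2.le]
  set x := 1 - ρ₁ / ε ^ 2
  set y := 1 - ρ₂ / ε ^ 2
  have hdiff : qfun n ε ρ₁ - qfun n ε ρ₂ =
      -((n + 1) / n * (x ^ n - y ^ n) + ∑ k ∈ Finset.Icc 1 (n - 1), 1 / (k : ℝ) * (x ^ k - y ^ k)) := by
    simp only [qfun, mul_sub, Finset.sum_sub_distrib]; ring
  have hpow (k : ℕ) : |x ^ k - y ^ k| ≤ k * |x - y| :=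
    abs_pow_sub_pow_le_of_abs_le_one (hunit ρ₁ h₁) (hunit ρ₂ h₂) k
  have hsum : ∑ k ∈ Finset.Icc 1 (n - 1), 1 / (k : ℝ) * (k * |x - y|) = (n - 1) * |x - y| := by
    calc _ = ∑ _k ∈ Finset.Icc 1 (n - 1), |x - y| := Finset.sum_congr rfl fun k hk => by
          have : (k : ℝ) ≠ 0 := Nat.cast_ne_zero.2 (by have := (Finset.mem_Icc.1 hk).1; omega)
          field_simp
      _ = (n - 1) * |x - y| := by
          rw [Finset.sum_const, Nat.card_Icc, nsmul_eq_mul, Nat.add_sub_cancel,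
            Nat.cast_pred (Nat.pos_of_ne_zero hn)]
  calc |qfun n ε ρ₁ - qfun n ε ρ₂|
      ≤ (n + 1) / n * |x ^ n - y ^ n| + ∑ k ∈ Finset.Icc 1 (n - 1), 1 / (k : ℝ) * |x ^ k - y ^ k| := by
        rw [hdiff, abs_neg]
        grw [abs_add_le, Finset.abs_sum_le_sum_abs]
        simp only [abs_mul, abs_div, abs_one, Nat.abs_cast,
          abs_of_nonneg (by positivity : (0 : ℝ) ≤ (n + 1) / n), le_refl]
    _ ≤ (n + 1) / n * (n * |x - y|) + ∑ k ∈ Finset.Icc 1 (n - 1), 1 / (k : ℝ) * (k * |x - y|) := by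
        gcongr with k; exact hpow n; exact hpow k
    _ = 2 * n * |x - y| := by
        rw [hsum]; field_simp; ring
    _ = 2 * n * |ρ₁ - ρ₂| / ε ^ 2 := by
        rw [show x - y = (ρ₂ - ρ₁) / ε ^ 2 by ring, abs_div, abs_of_pos hε2, abs_sub_comm]; ring

theorem qfun_sq {n : ℕ} (hn : n ≠ 0) {ε : ℝ} (hε : ε ≠ 0) :
    qfun n ε (ε ^ 2) = Real.log (ε ^ 2) := by
  have hk : ∀ k ∈ Finset.Icc 1 (n - 1), 1 / (k : ℝ) * (1 - ε ^ 2 / ε ^ 2) ^ k = 0 :=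
    fun k hk => by
      rw [div_self (by positivity), sub_self, zero_pow (by have := (Finset.mem_Icc.1 hk).1; omega),
        mul_zero]
  rw [qfun, Finset.sum_eq_zero hk, div_self (by positivity), sub_self, zero_pow hn]
  ring

theorem freg_of_le {n : ℕ} (hn : n ≠ 0) {ε : ℝ} (hε : ε ≠ 0) {ρ : ℝ} (hρ : ρ ≤ ε ^ 2) :
    freg n ε ρ = qfun n ε ρ := by
  rcases hρ.lt_or_eq with hlt | rfl
  · exact if_neg hlt.not_ge
  · rw [freg, if_pos le_rfl, qfun_sq hn hε]

theorem weightedLipschitzOn_freg_Ici (n : ℕ) {ε : ℝ} (hε : 0 < ε) :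
    WeightedLipschitzOn (fun r => freg n ε (r ^ 2)) 2 (Ici ε) := by
  intro a (ha : ε ≤ a) b (hb : ε ≤ b) hab
  have ha0 : 0 < a := hε.trans_le ha
  have hb0 : 0 < b := ha0.trans_le hab
  have hsq : ∀ r, ε ≤ r → freg n ε (r ^ 2) = 2 * Real.log r := fun r hr => by
    rw [freg, if_pos (pow_le_pow_left₀ hε.le hr 2), Real.log_pow]; push_cast; ring
  have hlog : Real.log b - Real.log a ≤ b / a - 1 := by
    rw [← Real.log_div hb0.ne' ha0.ne']
    exact Real.log_le_sub_one_of_pos (div_pos hb0 ha0)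
  calc a * |freg n ε (b ^ 2) - freg n ε (a ^ 2)| = 2 * (a * (Real.log b - Real.log a)) := by
        rw [hsq b hb, hsq a ha, ← mul_sub, abs_mul, abs_two,
          abs_of_nonneg (sub_nonneg.2 (Real.log_le_log ha0 hab))]
        ring
    _ ≤ 2 * (a * (b / a - 1)) := by gcongr
    _ = 2 * (b - a) := by field_simp

theorem weightedLipschitzOn_freg_Icc {n : ℕ} (hn : n ≠ 0) {ε : ℝ} (hε : 0 < ε) :
    WeightedLipschitzOn (fun r => freg n ε (r ^ 2)) (4 * n) (Icc 0 ε) := by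
  intro a ha b hb hab
  have hsq : ∀ r ∈ Icc 0 ε, r ^ 2 ∈ Icc 0 (ε ^ 2) := fun r hr =>
    ⟨sq_nonneg r, pow_le_pow_left₀ hr.1 hr.2 2⟩
  have hq := abs_qfun_sub_qfun_le hn hε.ne' (hsq b hb) (hsq a ha)
  dsimp only
  rw [freg_of_le hn hε.ne' (hsq b hb).2, freg_of_le hn hε.ne' (hsq a ha).2]
  have hba : |b ^ 2 - a ^ 2| = (b - a) * (b + a) := by
    rw [abs_of_nonneg (by nlinarith [ha.1])]; ring
  have hε2 : 0 < ε ^ 2 := by positivity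
  -- `a (a + b) ≤ 2ε²` absorbs the factor `b² - a² = (b - a)(b + a)`
  have hab2 : a * (b + a) ≤ 2 * ε ^ 2 := by nlinarith [ha.1, ha.2, hb.2]
  calc a * |qfun n ε (b ^ 2) - qfun n ε (a ^ 2)|
      ≤ a * (2 * n * ((b - a) * (b + a)) / ε ^ 2) := by
        rw [← hba]; exact mul_le_mul_of_nonneg_left hq ha.1
    _ = 2 * n * (b - a) * (a * (b + a)) / ε ^ 2 := by ring
    _ ≤ 2 * n * (b - a) * (2 * ε ^ 2) / ε ^ 2 := by gcongr
    _ = 4 * n * (b - a) := by field_simp; ring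

theorem weightedLipschitzOn_freg {n : ℕ} (hn : n ≠ 0) {ε : ℝ} (hε : 0 < ε) :
    WeightedLipschitzOn (fun r => freg n ε (r ^ 2)) (4 * n) (Ici 0) :=
  (weightedLipschitzOn_freg_Icc hn hε).Ici_of_Icc_of_Ici
    ((weightedLipschitzOn_freg_Ici n hε).weaken (by
      have : (1 : ℝ) ≤ n := Nat.one_le_cast.2 (Nat.pos_of_ne_zero hn)
      linarith))

theorem PhiB_eq_mul_exp_I_mul (n : ℕ) (ε τ : ℝ) (w : ℂ) :
    PhiB n ε τ w = w * Complex.exp (Complex.I * ↑(-τ * freg n ε (‖w‖ ^ 2))) := by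
  rw [PhiB]; push_cast; ring_nf

/-- Pointwise Lipschitz stability of the nonlinear flow:
`|Φ_B^τ(v) − Φ_B^τ(w)| ≤ (1 + 4nτ)|v − w|` for `τ ≥ 0`. -/
theorem stmt15 (n : ℕ) (hn : 2 ≤ n) (ε : ℝ) (hε : 0 < ε) (τ : ℝ) (hτ : 0 ≤ τ)
    (v w : ℂ) :
    ‖PhiB n ε τ v - PhiB n ε τ w‖ ≤
      (1 + 4 * n * τ) * ‖v - w‖ := by
  have hphase := (weightedLipschitzOn_freg (n := n) (by omega) hε).const_mul (-τ)
  rw [abs_neg, abs_of_nonneg hτ] at hphase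
  rw [PhiB_eq_mul_exp_I_mul, PhiB_eq_mul_exp_I_mul, show 4 * n * τ = τ * (4 * n) by ring]
  exact norm_mul_exp_I_mul_phase_sub_le (by positivity) hphase v w
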